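/- Let A be a real symmetric D×D matrix and let P_s = trace(A^s). Then for all natural numbers s, m with 1 ≤ s < 2m, P_s^{2m} ≤ D^{2m-s} · P_{2m}^s. -/

import Mathlib

/-!
Diagonalising `A`, both traces become power sums of the eigenvalues `λᵢ`. Since `2m` is even,
`|∑ λᵢ ^ s| ≤ ∑ |λᵢ| ^ s` reduces the claim to nonnegative reals, where it is the power-mean
inequality `(∑ xᵢ ^ p / D) ^ (1 / p) ≤ (∑ xᵢ ^ q / D) ^ (1 / q)` for `p = s ≤ q = 2m`.
-/

open Finset

theorem Matrix.IsHermitian.trace_pow_eq_sum_eigenvalues_pow {𝕜 n : Type*} [RCLike 𝕜] [Fintype n]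
    [DecidableEq n] {A : Matrix n n 𝕜} (hA : A.IsHermitian) (k : ℕ) :
    (A ^ k).trace = ∑ i, (hA.eigenvalues i : 𝕜) ^ k := by
  conv_lhs => rw [hA.spectral_theorem]
  rw [← map_pow, Unitary.conjStarAlgAut_apply, trace_mul_cycle,
    Unitary.coe_star_mul_self, one_mul, diagonal_pow, trace_diagonal]
  simp

theorem Finset.sum_pow_pow_le_card_pow_mul_sum_pow_pow {ι : Type*} (s : Finset ι) {f : ι → ℝ}
    (hf : ∀ i ∈ s, 0 ≤ f i) {a b : ℕ} (hab : a ≤ b) :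
    (∑ i ∈ s, f i ^ a) ^ b ≤ (#s : ℝ) ^ (b - a) * (∑ i ∈ s, f i ^ b) ^ a := by
  rcases Nat.eq_zero_or_pos a with rfl | ha
  · simp
  have ha' : (a : ℝ) ≠ 0 := by positivity
  have hp : 1 ≤ (b / a : ℝ) := by
    rw [one_le_div (by positivity)]; exact_mod_cast hab
  have hmean := Real.rpow_sum_le_const_mul_sum_rpow_of_nonneg (s := s) (f := fun i => f i ^ a) hp
    fun i hi => pow_nonneg (hf i hi) a
  have hcancel : ∀ i ∈ s, (f i ^ a) ^ (b / a : ℝ) = f i ^ b := fun i hi => by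
    rw [div_eq_mul_inv, mul_comm, Real.rpow_mul_natCast (pow_nonneg (hf i hi) a),
      Real.pow_rpow_inv_natCast (hf i hi) ha.ne']
  rw [sum_congr rfl hcancel] at hmean
  have hsum : 0 ≤ ∑ i ∈ s, f i ^ a := sum_nonneg fun i hi => pow_nonneg (hf i hi) a
  have hexp : (b / a - 1 : ℝ) * a = ((b - a : ℕ) : ℝ) := by
    rw [Nat.cast_sub hab]; field_simp
  calc (∑ i ∈ s, f i ^ a) ^ b
      = ((∑ i ∈ s, f i ^ a) ^ (b / a : ℝ)) ^ a := by
        rw [← Real.rpow_mul_natCast hsum, div_mul_cancel₀ _ ha', Real.rpow_natCast]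
    _ ≤ ((#s : ℝ) ^ (b / a - 1 : ℝ) * ∑ i ∈ s, f i ^ b) ^ a :=
        pow_le_pow_left₀ (Real.rpow_nonneg hsum _) hmean a
    _ = (#s : ℝ) ^ (b - a) * (∑ i ∈ s, f i ^ b) ^ a := by
        rw [mul_pow, ← Real.rpow_mul_natCast (Nat.cast_nonneg _), hexp, Real.rpow_natCast]

theorem Finset.sum_pow_pow_two_mul_le_card_pow_mul_sum_pow_two_mul {ι : Type*} (s : Finset ι)
    (f : ι → ℝ) {a m : ℕ} (ham : a ≤ 2 * m) :
    (∑ i ∈ s, f i ^ a) ^ (2 * m) ≤ (#s : ℝ) ^ (2 * m - a) * (∑ i ∈ s, f i ^ (2 * m)) ^ a := by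
  have heven : Even (2 * m) := even_two_mul m
  calc (∑ i ∈ s, f i ^ a) ^ (2 * m)
      = |∑ i ∈ s, f i ^ a| ^ (2 * m) := (heven.pow_abs _).symm
    _ ≤ (∑ i ∈ s, |f i| ^ a) ^ (2 * m) := by
        gcongr
        exact (abs_sum_le_sum_abs _ _).trans_eq (sum_congr rfl fun i _ => abs_pow _ _)
    _ ≤ (#s : ℝ) ^ (2 * m - a) * (∑ i ∈ s, |f i| ^ (2 * m)) ^ a :=
        s.sum_pow_pow_le_card_pow_mul_sum_pow_pow (fun i _ => abs_nonneg (f i)) ham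
    _ = (#s : ℝ) ^ (2 * m - a) * (∑ i ∈ s, f i ^ (2 * m)) ^ a := by
        simp_rw [heven.pow_abs]

theorem stmt_6_general (D : ℕ) (A : Matrix (Fin D) (Fin D) ℝ) (hA : A.IsSymm)
    (s m : ℕ) (hsm : s < 2 * m) :
    (A ^ s).trace ^ (2 * m) ≤ (D : ℝ) ^ (2 * m - s) * (A ^ (2 * m)).trace ^ s := by
  have hA' : A.IsHermitian := Matrix.isHermitian_iff_isSymm.mpr hA
  simp only [hA'.trace_pow_eq_sum_eigenvalues_pow, RCLike.ofReal_real_eq_id, id]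
  simpa using univ.sum_pow_pow_two_mul_le_card_pow_mul_sum_pow_two_mul hA'.eigenvalues hsm.le

theorem stmt_6 (D : ℕ) (hD : 1 ≤ D) (A : Matrix (Fin D) (Fin D) ℝ) (hA : A.IsSymm)
    (s m : ℕ) (hs : 1 ≤ s) (hsm : s < 2 * m) :
    (A ^ s).trace ^ (2 * m) ≤ (D : ℝ) ^ (2 * m - s) * (A ^ (2 * m)).trace ^ s :=
  stmt_6_general D A hA s m hsm
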